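/- arXiv:1509.02633 — 2 statements merged into one kernel-verified Lean document; each statement's English description precedes it below -/
import Mathlib

section
/- Fix M ≥ 2, K ≥ 1, T > 0, β_j > 0, and energies 0 < E_p^j < E_j for all j. For 0 < τ < T, set p_p^j = E_p^j/τ and p_u^j = (E_j − E_p^j)/(T − τ). Then for every user k, the spectral efficiency R_k(τ) = (1 − τ/T) log₂(1 + SINR_k) is a strictly decreasing function of τ on (0, T). -/
/-!
With `s = T - τ`, the fixed energies make the SINR collapse to `A / (c s + d)` with `A, c > 0` and
`d ≥ 0` independent of `τ`, so `R_k = s log (1 + A / (c s + d)) / (T log 2)`. With `x = c s + d`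
this is `(s / x) · x log (1 + A / x)`: the first factor is nondecreasing in `s`, and the second is
strictly increasing because `x log (1 + A / x) = A · log (1 + t) / t` for `t = A / x`, a secant slope
of the strictly concave `log` through `1`. Hence `R_k` strictly decreases in `τ`.
-/

/-- The uplink SINR of user `k` under MRC with pilot powers `pp` and data powers `pu`. -/
noncomputable def SINR (M K : ℕ) (τ : ℝ) (β pp pu : Fin K → ℝ) (k : Fin K) : ℝ :=
  ((M : ℝ) - 1) * pu k * pp k * (β k) ^ 2 * τ /
    (1 + ∑ j, β j * pu j + τ * β k * pp k +
      τ * pp k * β k * ∑ j ∈ Finset.univ.erase k, β j * pu j)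

/-- The achievable spectral efficiency `R_k = (1 - τ/T) log₂(1 + SINR_k)` of user `k`. -/
noncomputable def SE (M K : ℕ) (τ T : ℝ) (β pp pu : Fin K → ℝ) (k : Fin K) : ℝ :=
  (1 - τ / T) * Real.logb 2 (1 + SINR M K τ β pp pu k)

open Real Finset

theorem strictMonoOn_mul_log_one_add_div {a : ℝ} (ha : 0 < a) :
    StrictMonoOn (fun x : ℝ => x * log (1 + a / x)) (Set.Ioi 0) := by
  intro x (hx : 0 < x) y (hy : 0 < y) hxy
  have hu : 1 < 1 + a / y := by simp only [lt_add_iff_pos_right]; positivity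
  have huv : 1 + a / y < 1 + a / x := by gcongr
  have hsecant := strictConcaveOn_log_Ioi.secant_strict_mono (Set.mem_Ioi.2 one_pos)
    (zero_lt_one.trans hu) (zero_lt_one.trans (hu.trans huv)) hu.ne' (hu.trans huv).ne' huv
  simp only [log_one, sub_zero, add_sub_cancel_left, div_div_eq_mul_div] at hsecant
  rw [mul_comm (log _) x, mul_comm (log _) y] at hsecant
  exact (div_lt_div_iff_of_pos_right ha).1 hsecant

theorem strictMonoOn_mul_log_one_add_div_affine {A c d : ℝ} (hA : 0 < A) (hc : 0 < c)
    (hd : 0 ≤ d) : StrictMonoOn (fun s : ℝ => s * log (1 + A / (c * s + d))) (Set.Ioi 0) := by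
  intro s (hs : 0 < s) t (ht : 0 < t) hst
  have hxs : 0 < c * s + d := by positivity
  have hxt : 0 < c * t + d := by positivity
  have hkey := strictMonoOn_mul_log_one_add_div hA hxs hxt (by gcongr)
  have hratio : s / (c * s + d) ≤ t / (c * t + d) := by
    rw [div_le_div_iff₀ hxs hxt]; nlinarith
  have hlog : 0 < log (1 + A / (c * s + d)) :=
    log_pos (by simp only [lt_add_iff_pos_right]; positivity)
  dsimp only at hkey ⊢
  calc s * log (1 + A / (c * s + d))
      = s / (c * s + d) * ((c * s + d) * log (1 + A / (c * s + d))) := by field_simp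
    _ ≤ t / (c * t + d) * ((c * s + d) * log (1 + A / (c * s + d))) := by gcongr
    _ < t / (c * t + d) * ((c * t + d) * log (1 + A / (c * t + d))) := by gcongr
    _ = t * log (1 + A / (c * t + d)) := by field_simp

theorem SINR_energy_eq (M K : ℕ) {τ T : ℝ} (β Ep D : Fin K → ℝ) (k : Fin K) (hτ : τ ≠ 0)
    (hs : T - τ ≠ 0) :
    SINR M K τ β (fun j => Ep j / τ) (fun j => D j / (T - τ)) k =
      ((M : ℝ) - 1) * β k ^ 2 * Ep k * D k /
        ((1 + β k * Ep k) * (T - τ) +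
          (∑ j, β j * D j + β k * Ep k * ∑ j ∈ univ.erase k, β j * D j)) := by
  have hnum : ((M : ℝ) - 1) * (D k / (T - τ)) * (Ep k / τ) * β k ^ 2 * τ =
      ((M : ℝ) - 1) * β k ^ 2 * Ep k * D k / (T - τ) := by
    field_simp
  have hden : 1 + ∑ j, β j * (D j / (T - τ)) + τ * β k * (Ep k / τ) +
        τ * (Ep k / τ) * β k * ∑ j ∈ univ.erase k, β j * (D j / (T - τ)) =
      ((1 + β k * Ep k) * (T - τ) +
        (∑ j, β j * D j + β k * Ep k * ∑ j ∈ univ.erase k, β j * D j)) / (T - τ) := by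
    simp only [mul_div_assoc', ← Finset.sum_div]
    field_simp
    ring
  rw [SINR, hnum, hden, div_div_div_cancel_right₀ hs]

theorem SE_eq_mul_log_div (M K : ℕ) {τ T : ℝ} (β pp pu : Fin K → ℝ) (k : Fin K) (hT : T ≠ 0) :
    SE M K τ T β pp pu k = (T - τ) * log (1 + SINR M K τ β pp pu k) / (T * log 2) := by
  rw [SE, logb]
  field_simp

theorem stmt_7_general (M K : ℕ) (hM : 2 ≤ M) (T : ℝ) (hT : 0 < T)
    (β E Ep : Fin K → ℝ) (hβ : ∀ j, 0 < β j)
    (hEp : ∀ j, 0 < Ep j) (hEpE : ∀ j, Ep j < E j) (k : Fin K) :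
    StrictAntiOn (fun τ : ℝ =>
      SE M K τ T β (fun j => Ep j / τ) (fun j => (E j - Ep j) / (T - τ)) k)
      (Set.Ioo 0 T) := by
  have hD : ∀ j, 0 < E j - Ep j := fun j => sub_pos.2 (hEpE j)
  have hM1 : (0 : ℝ) < (M : ℝ) - 1 := by
    have : (2 : ℝ) ≤ M := by exact_mod_cast hM
    linarith
  have hA : 0 < ((M : ℝ) - 1) * β k ^ 2 * Ep k * (E k - Ep k) := by
    have := hβ k; have := hEp k; have := hD k; positivity
  have hc : 0 < 1 + β k * Ep k := add_pos one_pos (mul_pos (hβ k) (hEp k))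
  have hd : 0 ≤ ∑ j, β j * (E j - Ep j) +
      β k * Ep k * ∑ j ∈ univ.erase k, β j * (E j - Ep j) := by
    have hterm : ∀ j, 0 ≤ β j * (E j - Ep j) := fun j => (mul_pos (hβ j) (hD j)).le
    exact add_nonneg (sum_nonneg fun j _ => hterm j)
      (mul_nonneg (mul_pos (hβ k) (hEp k)).le (sum_nonneg fun j _ => hterm j))
  intro τ ⟨hτ, hτT⟩ σ ⟨hσ, hσT⟩ hτσ
  simp only [SE_eq_mul_log_div M K β _ _ k hT.ne',
    SINR_energy_eq M K β Ep _ k hτ.ne' (sub_pos.2 hτT).ne',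
    SINR_energy_eq M K β Ep _ k hσ.ne' (sub_pos.2 hσT).ne']
  exact div_lt_div_of_pos_right
    (strictMonoOn_mul_log_one_add_div_affine hA hc hd (sub_pos.2 hσT) (sub_pos.2 hτT) (by linarith))
    (by positivity)

/-- With per-user pilot energy `E_p^j = τ p_p^j` and data energy
`E_j − E_p^j = (T−τ) p_u^j` held fixed, each user's spectral efficiency
`R_k(τ)` is a strictly decreasing function of the pilot length `τ` on `(0, T)`. -/
theorem stmt_7 (M K : ℕ) (hM : 2 ≤ M) (hK : 1 ≤ K) (T : ℝ) (hT : 0 < T)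
    (β E Ep : Fin K → ℝ) (hβ : ∀ j, 0 < β j)
    (hEp : ∀ j, 0 < Ep j) (hEpE : ∀ j, Ep j < E j) (k : Fin K) :
    StrictAntiOn (fun τ : ℝ =>
      SE M K τ T β (fun j => Ep j / τ) (fun j => (E j - Ep j) / (T - τ)) k)
      (Set.Ioo 0 T) :=
  stmt_7_general M K hM T hT β E Ep hβ hEp hEpE k
end

section
/- (Theorem 1) Fix M ≥ 2, K ≥ 1, T > K, β_j > 0, and energy budget E_max > 0. Let U : ℝ^K → ℝ be nondecreasing in each argument. For any feasible point (τ, p_p, p_u) of the joint optimization — i.e., K ≤ τ ≤ T, p_p^j ≥ 0, p_u^j ≥ 0, and τ p_p^j + (T−τ) p_u^j ≤ E_max for every j — there exists a feasible point (K, p_p', p_u') with pilot length exactly K, namely p_p'^j = τ p_p^j / K and p_u'^j = (T−τ) p_u^j / (T−K), such that U(R_1(K, p_p', p_u'), …, R_K(K, p_p', p_u')) ≥ U(R_1(τ, p_p, p_u), …, R_K(τ, p_p, p_u)). Hence the optimal training length is τ = K. -/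
/-- Pointwise monotonicity from coordinatewise monotonicity. -/
lemma mono_util {K : ℕ} (U : (Fin K → ℝ) → ℝ)
    (hU : ∀ (v : Fin K → ℝ) (i : Fin K) (x y : ℝ), x ≤ y →
      U (Function.update v i x) ≤ U (Function.update v i y))
    (v w : Fin K → ℝ) (hvw : ∀ i, v i ≤ w i) : U v ≤ U w := by
  have key : ∀ s : Finset (Fin K),
      U (fun i => if i ∈ s then v i else w i) ≤ U w := by
    intro s
    induction s using Finset.induction with
    | empty => simp
    | @insert a s ha ih =>
      set g : Fin K → ℝ := fun i => if i ∈ s then v i else w i with hg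
      have h1 : (fun i => if i ∈ insert a s then v i else w i)
          = Function.update g a (v a) := by
        funext i
        by_cases h : i = a
        · subst h; simp [Function.update, g]
        · simp [Function.update, h, g, Finset.mem_insert]
      rw [h1]
      have h2 : U (Function.update g a (v a)) ≤ U (Function.update g a (g a)) := by
        apply hU
        have : g a = w a := by simp [g, ha]
        rw [this]; exact hvw a
      rw [Function.update_eq_self] at h2
      exact h2.trans ih
  have := key Finset.univ
  simpa using this

lemma key_log (c N D0 D1 : ℝ) (hc0 : 0 ≤ c) (hc1 : c ≤ 1) (hN : 0 ≤ N)
    (hD0 : 1 ≤ D0) (hD1 : 0 ≤ D1) :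
    c * Real.log (1 + N / (D0 + D1)) ≤ Real.log (1 + c * N / (D0 + c * D1)) := by
  have hD0pos : (0:ℝ) < D0 := lt_of_lt_of_le one_pos hD0
  have hden1 : (0:ℝ) < D0 + D1 := by linarith
  have hden2 : (0:ℝ) < D0 + c * D1 := by nlinarith
  have hS1 : 0 ≤ N / (D0 + D1) := div_nonneg hN hden1.le
  -- Bernoulli: (1+S1)^c ≤ 1 + c*S1
  have hb : (1 + N / (D0 + D1)) ^ c ≤ 1 + c * (N / (D0 + D1)) :=
    rpow_one_add_le_one_add_mul_self (by linarith) hc0 hc1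
  have hstep : c * (N / (D0 + D1)) ≤ c * N / (D0 + c * D1) := by
    rw [mul_div_assoc]
    apply mul_le_mul_of_nonneg_left _ hc0
    apply div_le_div_of_nonneg_left hN hden2
    nlinarith
  have h1pos : (0:ℝ) < 1 + N / (D0 + D1) := by linarith
  calc c * Real.log (1 + N / (D0 + D1))
      = Real.log ((1 + N / (D0 + D1)) ^ c) := (Real.log_rpow h1pos c).symm
    _ ≤ Real.log (1 + c * N / (D0 + c * D1)) := by
        apply Real.log_le_log (Real.rpow_pos_of_pos h1pos c)
        linarith

/-- Theorem 1: For any utility `U` nondecreasing in each argument and any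
feasible point `(τ, p_p, p_u)` (with `K ≤ τ ≤ T` and per-user energy constraints), the
point with pilot length exactly `K` given by `p_p'^j = τ p_p^j / K` and
`p_u'^j = (T−τ) p_u^j / (T−K)` is feasible and achieves at least the same utility.
Hence the optimal training length is `τ = K`. -/
theorem stmt_8 (M K : ℕ) (hM : 2 ≤ M) (hK : 1 ≤ K) (T Emax : ℝ)
    (hT : (K : ℝ) < T) (hE : 0 < Emax)
    (β : Fin K → ℝ) (hβ : ∀ j, 0 < β j)
    (U : (Fin K → ℝ) → ℝ)
    (hU : ∀ (v : Fin K → ℝ) (i : Fin K) (x y : ℝ), x ≤ y →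
      U (Function.update v i x) ≤ U (Function.update v i y))
    (τ : ℝ) (pp pu : Fin K → ℝ)
    (hτ1 : (K : ℝ) ≤ τ) (hτ2 : τ ≤ T)
    (hpp : ∀ j, 0 ≤ pp j) (hpu : ∀ j, 0 ≤ pu j)
    (hfeas : ∀ j, τ * pp j + (T - τ) * pu j ≤ Emax) :
    (∀ j, 0 ≤ τ * pp j / (K : ℝ)) ∧
    (∀ j, 0 ≤ (T - τ) * pu j / (T - (K : ℝ))) ∧
    (∀ j, (K : ℝ) * (τ * pp j / (K : ℝ)) +
      (T - (K : ℝ)) * ((T - τ) * pu j / (T - (K : ℝ))) ≤ Emax) ∧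
    U (fun i => SE M K τ T β pp pu i) ≤
      U (fun i => SE M K (K : ℝ) T β (fun j => τ * pp j / (K : ℝ))
        (fun j => (T - τ) * pu j / (T - (K : ℝ))) i) := by
  have hKpos : (0:ℝ) < (K:ℝ) := by exact_mod_cast Nat.pos_of_ne_zero (by omega)
  have hK1 : (1:ℝ) ≤ (K:ℝ) := by exact_mod_cast hK
  have hTK : (0:ℝ) < T - (K:ℝ) := by linarith
  have hτpos : 0 < τ := lt_of_lt_of_le hKpos hτ1
  have hTpos : 0 < T := lt_trans hKpos hT
  -- definitions of c
  set c : ℝ := (T - τ) / (T - (K:ℝ)) with hc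
  have hc0 : 0 ≤ c := div_nonneg (by linarith) hTK.le
  have hc1 : c ≤ 1 := by
    rw [div_le_one hTK]; linarith
  refine ⟨fun j => div_nonneg (mul_nonneg hτpos.le (hpp j)) hKpos.le,
    fun j => div_nonneg (mul_nonneg (by linarith) (hpu j)) hTK.le,
    fun j => ?_, ?_⟩
  · rw [mul_div_cancel₀ _ hKpos.ne', mul_div_cancel₀ _ hTK.ne']
    exact hfeas j
  · apply mono_util U hU
    intro k
    -- notation
    set N : ℝ := ((M : ℝ) - 1) * pu k * pp k * (β k) ^ 2 * τ with hN
    set D0 : ℝ := 1 + τ * β k * pp k with hD0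
    set D1 : ℝ := (∑ j, β j * pu j) +
        τ * pp k * β k * ∑ j ∈ Finset.univ.erase k, β j * pu j with hD1
    have hM1 : (1:ℝ) ≤ (M:ℝ) - 1 := by
      have : (2:ℝ) ≤ (M:ℝ) := by exact_mod_cast hM
      linarith
    have hNn : 0 ≤ N := by
      apply mul_nonneg _ hτpos.le
      apply mul_nonneg (mul_nonneg (mul_nonneg (by linarith) (hpu k)) (hpp k)) (sq_nonneg _)
    have hD0n : 1 ≤ D0 := by
      have : 0 ≤ τ * β k * pp k :=
        mul_nonneg (mul_nonneg hτpos.le (hβ k).le) (hpp k)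
      simp [hD0]; linarith
    have hsum : 0 ≤ ∑ j, β j * pu j :=
      Finset.sum_nonneg fun j _ => mul_nonneg (hβ j).le (hpu j)
    have hsum' : 0 ≤ ∑ j ∈ Finset.univ.erase k, β j * pu j :=
      Finset.sum_nonneg fun j _ => mul_nonneg (hβ j).le (hpu j)
    have hD1n : 0 ≤ D1 := by
      apply add_nonneg hsum
      exact mul_nonneg (mul_nonneg (mul_nonneg hτpos.le (hpp k)) (hβ k).le) hsum'
    -- old SINR
    have hold : SINR M K τ β pp pu k = N / (D0 + D1) := by
      simp only [SINR, hN, hD0, hD1]; ring_nf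
    -- new SINR
    have hnew : SINR M K (K:ℝ) β (fun j => τ * pp j / (K:ℝ))
        (fun j => (T - τ) * pu j / (T - (K:ℝ))) k = c * N / (D0 + c * D1) := by
      simp only [SINR, hN, hD0, hD1, hc]
      have e1 : ∀ j : Fin K, (T - τ) * pu j / (T - (K:ℝ)) = (T - τ) / (T - (K:ℝ)) * pu j := by
        intro j; ring
      have e2 : (K:ℝ) * β k * (τ * pp k / (K:ℝ)) = τ * β k * pp k := by
        field_simp
      have e3 : ∀ (s : Finset (Fin K)), ∑ j ∈ s, β j * ((T - τ) * pu j / (T - (K:ℝ)))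
          = (T - τ) / (T - (K:ℝ)) * ∑ j ∈ s, β j * pu j := by
        intro s; rw [Finset.mul_sum]; apply Finset.sum_congr rfl; intro j _; ring
      rw [e2, e3, e3]
      rw [div_eq_div_iff]
      · field_simp; ring
      · have : 0 ≤ (T - τ) / (T - (K:ℝ)) * ∑ j, β j * pu j := mul_nonneg hc0 hsum
        have h2 : 0 ≤ (K:ℝ) * (τ * pp k / (K:ℝ)) * β k *
            ((T - τ) / (T - (K:ℝ)) * ∑ j ∈ Finset.univ.erase k, β j * pu j) := by
          apply mul_nonneg
          apply mul_nonneg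
          apply mul_nonneg hKpos.le
          exact div_nonneg (mul_nonneg hτpos.le (hpp k)) hKpos.le
          exact (hβ k).le
          exact mul_nonneg hc0 hsum'
        have h3 : 0 ≤ τ * β k * pp k :=
          mul_nonneg (mul_nonneg hτpos.le (hβ k).le) (hpp k)
        nlinarith
      · nlinarith
    -- compare SEs
    simp only [SE, hold, hnew]
    have hτT : 1 - τ / T = (T - (K:ℝ)) / T * c := by
      rw [hc]; field_simp
    have hKT : 1 - (K:ℝ) / T = (T - (K:ℝ)) / T := by
      field_simp
    rw [hτT, hKT, mul_assoc]
    apply mul_le_mul_of_nonneg_left _ (div_nonneg hTK.le hTpos.le)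
    unfold Real.logb
    rw [mul_div_assoc']
    apply div_le_div_of_nonneg_right _ (Real.log_pos one_lt_two).le
    exact key_log c N D0 D1 hc0 hc1 hNn hD0n hD1n
end
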